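/- For λ > 0, define p_λ(u) = 1/2 + (1/2)·sgn(u)·(1 − e^{−|u|/λ}) for u ∈ ℝ. Let M ≥ 1 and let u_1, …, u_M be real numbers with ∑_{m=1}^{M} u_m < 0. Then there exist γ > 1 and λ_0 > 0 such that for all λ ≥ λ_0: (1/M)·∑_{m=1}^{M} p_λ(u_m) ≤ 1/2 + (∑_{m=1}^{M} u_m)/(2·M·λ·γ). -/

import Mathlib

/-!
With `x = u / λ`, one has `sgn x · (1 - e^{-|x|}) ≤ x + x²` for every real `x` (for `x < 0` because
`e^x ≤ 1 / (1 - x) ≤ 1 + x + x²`). Summing, the average of `p_λ(u_m)` exceeds `1/2` by at most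
`(S / λ + K / λ²) / (2M)`, where `S = ∑ u_m < 0` and `K = ∑ u_m²`. Once `λ ≥ (2K + 1) / (-S)` the
quadratic term is at most half of the linear one, which gives the bound with `γ = 2`.
-/

/-- The probability that the Laplace-noise `dp-sign` compressor with scale `λ` outputs `1` on
input `u`: `p_λ(u) = 1/2 + (1/2) sgn(u) (1 - e^{-|u|/λ})`. -/
noncomputable def pLap (lam u : ℝ) : ℝ :=
  1 / 2 + 1 / 2 * Real.sign u * (1 - Real.exp (-|u| / lam))

open Real Finset

lemma Real.exp_le_one_add_add_sq_of_nonpos {x : ℝ} (hx : x ≤ 0) : exp x ≤ 1 + x + x ^ 2 := by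
  have h : exp x * (1 - x) ≤ 1 :=
    calc exp x * (1 - x) ≤ exp x * exp (-x) := by gcongr; linarith [add_one_le_exp (-x)]
      _ = 1 := by rw [← exp_add, add_neg_cancel, exp_zero]
  nlinarith [pow_two_nonneg x, mul_nonpos_of_nonpos_of_nonneg hx (sq_nonneg x)]

lemma Real.sign_mul_one_sub_exp_neg_abs_le (x : ℝ) :
    Real.sign x * (1 - exp (-|x|)) ≤ x + x ^ 2 := by
  rcases lt_trichotomy x 0 with hx | rfl | hx
  · rw [Real.sign_of_neg hx, abs_of_neg hx, neg_neg]
    linarith [exp_le_one_add_add_sq_of_nonpos hx.le]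
  · simp
  · rw [Real.sign_of_pos hx, abs_of_pos hx]
    nlinarith [add_one_le_exp (-x)]

lemma Real.sign_div_of_pos (u : ℝ) {c : ℝ} (hc : 0 < c) : Real.sign (u / c) = Real.sign u := by
  rcases lt_trichotomy u 0 with hu | rfl | hu
  · rw [Real.sign_of_neg hu, Real.sign_of_neg (div_neg_of_neg_of_pos hu hc)]
  · simp
  · rw [Real.sign_of_pos hu, Real.sign_of_pos (div_pos hu hc)]

lemma pLap_le {lam : ℝ} (hlam : 0 < lam) (u : ℝ) :
    pLap lam u ≤ 1 / 2 + (u / lam + (u / lam) ^ 2) / 2 := by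
  have h := Real.sign_mul_one_sub_exp_neg_abs_le (u / lam)
  rw [Real.sign_div_of_pos u hlam, abs_div, abs_of_pos hlam, ← neg_div] at h
  unfold pLap
  linarith

lemma sum_pLap_le {ι : Type*} [Fintype ι] {lam : ℝ} (hlam : 0 < lam) (u : ι → ℝ) :
    ∑ i, pLap lam (u i) ≤
      Fintype.card ι / 2 + ((∑ i, u i) / lam + (∑ i, u i ^ 2) / lam ^ 2) / 2 :=
  calc ∑ i, pLap lam (u i) ≤ ∑ i, (1 / 2 + (u i / lam + (u i / lam) ^ 2) / 2) :=
        sum_le_sum fun i _ => pLap_le hlam (u i)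
    _ = _ := by
      simp only [sum_add_distrib, ← sum_div, div_pow, sum_const, card_univ, nsmul_eq_mul]
      ring

/-- If `∑ u_m < 0`, then there exist `γ > 1` and `lam₀ > 0` such that for all
`λ ≥ lam₀`: `(1/M) ∑ p_λ(u_m) ≤ 1/2 + (∑ u_m)/(2Mλγ)`. -/
theorem stmt_15 (M : ℕ) (hM : 1 ≤ M) (u : Fin M → ℝ) (hsum : ∑ m, u m < 0) :
    ∃ γ > (1 : ℝ), ∃ lam₀ > (0 : ℝ), ∀ lam ≥ lam₀,
      (1 / M) * ∑ m, pLap lam (u m) ≤ 1 / 2 + (∑ m, u m) / (2 * M * lam * γ) := by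
  set S := ∑ m, u m
  set K := ∑ m, u m ^ 2
  have hK : 0 ≤ K := sum_nonneg fun m _ => sq_nonneg (u m)
  have hS : 0 < -S := neg_pos.mpr hsum
  have hM₀ : (0 : ℝ) < M := by exact_mod_cast hM
  refine ⟨2, one_lt_two, (2 * K + 1) / -S, by positivity, fun lam hlam => ?_⟩
  have hlam₀ : 0 < lam := lt_of_lt_of_le (by positivity) hlam
  have hKS : K / lam ^ 2 ≤ -S / (2 * lam) := by
    have : 2 * K + 1 ≤ lam * -S := (div_le_iff₀ hS).mp hlam
    rw [div_le_div_iff₀ (by positivity) (by positivity)]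
    nlinarith
  calc (1 / M) * ∑ m, pLap lam (u m)
      ≤ (1 / M) * (M / 2 + (S / lam + K / lam ^ 2) / 2) := by
        simpa using mul_le_mul_of_nonneg_left (sum_pLap_le hlam₀ u) (one_div_nonneg.mpr hM₀.le)
    _ ≤ (1 / M) * (M / 2 + (S / lam + -S / (2 * lam)) / 2) := by gcongr
    _ = 1 / 2 + S / (2 * M * lam * 2) := by field_simp; ring
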